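/- Let Δ be a type, N ∈ ℕ with N ≥ 1, d = (δ¹,...,δᴺ) ∈ Δᴺ a sample, 𝒴 a type equipped with a linear order ⪯, and C : 𝒴 → Δ → Prop a constraint predicate. Suppose the solver is the order-consistent minimizer: for every nonempty index subset S ⊆ {1,...,N}, the feasible set F(S) = {y ∈ 𝒴 : C(y, δ^i) for all i ∈ S} has a ⪯-least element, and 𝒜(S) is defined to be this least element; write y* = 𝒜({1,...,N}). Let L be the output of the greedy procedure (L₀ = {1,...,N}; for i = 1,...,N, L_i = L_{i−1} \ {i} if this set is nonempty and 𝒜(L_{i−1} \ {i}) = y*, else L_i = L_{i−1}; L = L_N). Then L is an irreducible support subsample: 𝒜(L) = y*, and for every j ∈ L with L \ {j} ≠ ∅, 𝒜(L \ {j}) ≠ y*. -/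
import Mathlib


open Finset

/-- For the order-consistent minimizing solver (the solver returns the `⪯`-least
element of the feasible set `F(S) = {y : C y (d i) ∀ i ∈ S}` of the supplied
scenarios), the greedy support-subsample algorithm returns an *irreducible* support
subsample: `A (L N) = A univ`, and removing any further element of `L N` (keeping it
nonempty) changes the returned solution. -/
theorem greedy_returns_irreducible_support_subsample
    {Δ Y : Type*} [LinearOrder Y] (N : ℕ) (hN : 1 ≤ N) (d : Fin N → Δ)
    (C : Y → Δ → Prop)
    (A : Finset (Fin N) → Y)
    (hA : ∀ S : Finset (Fin N), S.Nonempty →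
      IsLeast {y : Y | ∀ i ∈ S, C y (d i)} (A S))
    (L : ℕ → Finset (Fin N))
    (hL0 : L 0 = Finset.univ)
    (hstep : ∀ i : Fin N,
      ((((L i.val).erase i).Nonempty ∧ A ((L i.val).erase i) = A Finset.univ) →
          L (i.val + 1) = (L i.val).erase i) ∧
      (¬(((L i.val).erase i).Nonempty ∧ A ((L i.val).erase i) = A Finset.univ) →
          L (i.val + 1) = L i.val)) :
    (L N).Nonempty ∧ A (L N) = A Finset.univ ∧
      ∀ j ∈ L N, ((L N).erase j).Nonempty → A ((L N).erase j) ≠ A Finset.univ := by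

  have hFin : Nonempty (Fin N) := ⟨⟨0, hN⟩⟩
  have huniv : (Finset.univ : Finset (Fin N)).Nonempty := Finset.univ_nonempty
  have mono : ∀ S T : Finset (Fin N), S ⊆ T → S.Nonempty →
      A S = A Finset.univ → A T = A Finset.univ := by
    intro S T hST hS hAS
    have hT : T.Nonempty := hS.mono hST
    obtain ⟨hSmem, hSle⟩ := hA S hS
    obtain ⟨hTmem, hTle⟩ := hA T hT
    obtain ⟨hUmem, _⟩ := hA Finset.univ huniv
    have h1 : A T ≤ A Finset.univ :=
      hTle (fun i _ => hUmem i (Finset.mem_univ i))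
    have h2 : A Finset.univ ≤ A T := by
      rw [← hAS]
      exact hSle (fun i hi => hTmem i (hST hi))
    exact le_antisymm h1 h2
  have step_sub : ∀ i : Fin N, L (i.val + 1) ⊆ L i.val := by
    intro i
    rcases Classical.em ((((L i.val).erase i).Nonempty ∧
        A ((L i.val).erase i) = A Finset.univ)) with h | h
    · rw [(hstep i).1 h]; exact Finset.erase_subset _ _
    · rw [(hstep i).2 h]
  have aux : ∀ m, m ≤ N → ∀ k, k ≤ m → L m ⊆ L k := by
    intro m
    induction m with
    | zero => intro _ k hk; interval_cases k; rfl
    | succ m ih =>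
      intro hm k hk
      rcases Nat.eq_or_lt_of_le hk with h | h
      · subst h; rfl
      · have hk' : k ≤ m := by omega
        have h1 : L (m + 1) ⊆ L m := step_sub ⟨m, by omega⟩
        exact h1.trans (ih (by omega) k hk')
  have inv : ∀ k, k ≤ N → (L k).Nonempty ∧ A (L k) = A Finset.univ := by
    intro k
    induction k with
    | zero => intro _; rw [hL0]; exact ⟨huniv, rfl⟩
    | succ k ih =>
      intro hk
      have ihk := ih (by omega)
      rcases Classical.em ((((L k).erase ⟨k, by omega⟩).Nonempty ∧
          A ((L k).erase ⟨k, by omega⟩) = A Finset.univ)) with h | h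
      · have := (hstep ⟨k, by omega⟩).1 h
        simp only at this
        rw [this]; exact h
      · have := (hstep ⟨k, by omega⟩).2 h
        simp only at this
        rw [this]; exact ihk
  obtain ⟨hNe, hAeq⟩ := inv N le_rfl
  refine ⟨hNe, hAeq, ?_⟩
  intro j hj hne hcontra
  have hsubj : L N ⊆ L j.val := aux N le_rfl j.val (by omega)
  have hsub : (L N).erase j ⊆ (L j.val).erase j := Finset.erase_subset_erase _ hsubj
  have hne' : ((L j.val).erase j).Nonempty := hne.mono hsub
  have hA' : A ((L j.val).erase j) = A Finset.univ := mono _ _ hsub hne hcontra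
  have hstepj := (hstep j).1 ⟨hne', hA'⟩
  have hsubN : L N ⊆ L (j.val + 1) := aux N le_rfl (j.val + 1) (by omega)
  have : j ∈ (L j.val).erase j := by rw [← hstepj]; exact hsubN hj
  exact (Finset.notMem_erase j _) this
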